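/- arXiv:1508.05748 — 9 statements merged into one kernel-verified Lean document; each statement's English description precedes it below -/
import Mathlib

section
/- For all natural numbers x, y, z with 0 ≤ x ≤ y ≤ z and z ≥ x + 1, one has F(x,y,z) ≥ 3z − 2. -/
/-- `F x y z = x³ + y³ + z³ − 3xyz` as an integer-valued expression on ℕ. -/
def F (x y z : ℕ) : ℤ :=
  (x : ℤ) ^ 3 + (y : ℤ) ^ 3 + (z : ℤ) ^ 3 - 3 * (x : ℤ) * (y : ℤ) * (z : ℤ)

theorem stmt_0 (x y z : ℕ) (hxy : x ≤ y) (hyz : y ≤ z) (hxz : x + 1 ≤ z) :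
    F x y z ≥ 3 * (z : ℤ) - 2 := by
  unfold F
  have h1 : (x : ℤ) ≤ y := by exact_mod_cast hxy
  have h2 : (y : ℤ) ≤ z := by exact_mod_cast hyz
  have h3 : (x : ℤ) + 1 ≤ z := by exact_mod_cast hxz
  have hx : (0 : ℤ) ≤ x := by positivity
  rcases eq_or_lt_of_le h1 with hyx | hyx
  · -- y = x, so z ≥ x+1; F = (3x + b) * b² with b = z - x ≥ 1
    rw [← hyx]
    rcases eq_or_lt_of_le h3 with hzx | hzx
    · rw [← hzx]; ring_nf; nlinarith
    · have hb : (x : ℤ) + 2 ≤ z := hzx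
      nlinarith [mul_nonneg hx (sq_nonneg ((z:ℤ)-x)), sq_nonneg ((z:ℤ)-x),
        mul_nonneg (by linarith : (0:ℤ) ≤ z - x - 2) (sq_nonneg ((z:ℤ)-x)),
        mul_nonneg hx (by linarith : (0:ℤ) ≤ z - x - 2)]
  · have ha : (x : ℤ) + 1 ≤ y := hyx
    rcases eq_or_lt_of_le h2 with hzy | hzy
    · -- z = y, a = y - x ≥ 1
      rw [← hzy]
      rcases eq_or_lt_of_le ha with hy1 | hy1
      · rw [← hy1]; ring_nf; nlinarith
      · have ha2 : (x : ℤ) + 2 ≤ y := hy1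
        nlinarith [mul_nonneg hx (sq_nonneg ((y:ℤ)-x)), sq_nonneg ((y:ℤ)-x),
          mul_nonneg (by linarith : (0:ℤ) ≤ y - x - 2) (sq_nonneg ((y:ℤ)-x)),
          mul_nonneg hx (by linarith : (0:ℤ) ≤ y - x - 2)]
    · -- a ≥ 1, b ≥ 1: F ≥ 3z
      have hb : (y : ℤ) + 1 ≤ z := hzy
      nlinarith [mul_nonneg hx (sq_nonneg ((y:ℤ)-x)), mul_nonneg hx (sq_nonneg ((z:ℤ)-y)),
        mul_nonneg hx (mul_nonneg (sub_nonneg.2 h1) (sub_nonneg.2 h2)),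
        mul_nonneg (mul_nonneg (sub_nonneg.2 h1) (sub_nonneg.2 h2)) (sub_nonneg.2 h2),
        mul_nonneg (mul_nonneg (sub_nonneg.2 h1) (sub_nonneg.2 h1)) (sub_nonneg.2 h2),
        mul_pos (sub_pos.2 hyx) (sub_pos.2 hzy), sq_nonneg ((y:ℤ)-x), sq_nonneg ((z:ℤ)-y)]
end

section
/- For all natural numbers x, y, z with 0 ≤ x ≤ y ≤ z and z ≥ x + 2, one has F(x,y,z) ≥ 9z − 10. -/
theorem stmt_1 (x y z : ℕ) (hxy : x ≤ y) (hyz : y ≤ z) (hxz : x + 2 ≤ z) :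
    F x y z ≥ 9 * (z : ℤ) - 10 := by
  have hx : (0:ℤ) ≤ x := Int.ofNat_nonneg x
  have h1 : (x:ℤ) ≤ y := by exact_mod_cast hxy
  have h2 : (y:ℤ) ≤ z := by exact_mod_cast hyz
  have h3 : (x:ℤ) + 2 ≤ z := by exact_mod_cast hxz
  set a : ℤ := (y:ℤ) - x with ha
  set b : ℤ := (z:ℤ) - x with hb
  have ha0 : 0 ≤ a := by omega
  have hab : a ≤ b := by omega
  have hb2 : 2 ≤ b := by omega
  have key : F x y z = (3*(x:ℤ) + a + b) * (a^2 - a*b + b^2) := by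
    unfold F; ring
  have hq : 3 ≤ a^2 - a*b + b^2 := by nlinarith [sq_nonneg (2*a - b)]
  have hcube : b^3 ≥ 9*b - 10 := by nlinarith [mul_nonneg (by linarith : (0:ℤ) ≤ b - 2) (by nlinarith : (0:ℤ) ≤ b^2 + 2*b - 5)]
  have ha3 : 0 ≤ a^3 := by positivity
  have hid : (a + b) * (a^2 - a*b + b^2) = a^3 + b^3 := by ring
  rw [key]
  have hxq : 3*(x:ℤ) * 3 ≤ 3*(x:ℤ) * (a^2 - a*b + b^2) :=
    mul_le_mul_of_nonneg_left hq (by linarith)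
  have : (3*(x:ℤ) + a + b) * (a^2 - a*b + b^2) = 3*(x:ℤ) * (a^2 - a*b + b^2) + (a^3 + b^3) := by
    rw [← hid]; ring
  rw [this]
  have hz : (z:ℤ) = x + b := by omega
  rw [hz]; linarith
end

section
/- For every positive integer n that is not congruent to 3 or −3 modulo 9, there exist natural numbers x, y, z with 0 ≤ x ≤ y ≤ z, z ≥ x + 1 and F(x,y,z) = n; equivalently ν(n) ≥ 1. -/
theorem stmt_4 (n : ℕ) (hn : 0 < n) (h3 : n % 9 ≠ 3) (h6 : n % 9 ≠ 6) :
    ∃ x y z : ℕ, x ≤ y ∧ y ≤ z ∧ x + 1 ≤ z ∧ F x y z = n := by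
  have hm : n % 3 = 0 ∨ n % 3 = 1 ∨ n % 3 = 2 := by omega
  rcases hm with h | h | h
  · obtain ⟨k, rfl⟩ : ∃ k, n = 9 * (k + 1) := ⟨n / 9 - 1, by omega⟩
    exact ⟨k, k + 1, k + 2, by omega, by omega, by omega, by simp only [F]; push_cast; ring⟩
  · obtain ⟨k, rfl⟩ : ∃ k, n = 3 * k + 1 := ⟨n / 3, by omega⟩
    exact ⟨k, k, k + 1, le_refl _, by omega, by omega, by simp only [F]; push_cast; ring⟩
  · obtain ⟨k, rfl⟩ : ∃ k, n = 3 * k + 2 := ⟨n / 3, by omega⟩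
    exact ⟨k, k + 1, k + 1, by omega, le_refl _, by omega, by simp only [F]; push_cast; ring⟩
end

section
/- For every prime p with p ≠ 3, ν(p) = 1; that is, there is exactly one triple (x,y,z) ∈ ℕ³ with 0 ≤ x ≤ y ≤ z, z ≥ x + 1 and F(x,y,z) = p. -/
/-- ν(n): the number of triples (x,y,z) with x ≤ y ≤ z, z ≥ x + 1 and F(x,y,z) = n. -/
noncomputable def nu (n : ℕ) : ℕ :=
  Set.ncard {t : ℕ × ℕ × ℕ |
    t.1 ≤ t.2.1 ∧ t.2.1 ≤ t.2.2 ∧ t.1 + 1 ≤ t.2.2 ∧ F t.1 t.2.1 t.2.2 = n}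

lemma Fval1 (k : ℕ) : F k k (k+1) = 3*(k:ℤ)+1 := by
  unfold F; push_cast; ring

lemma Fval2 (k : ℕ) : F k (k+1) (k+1) = 3*(k:ℤ)+2 := by
  unfold F; push_cast; ring

lemma key (p : ℕ) (hp : p.Prime) (x y z : ℕ) (hxy : x ≤ y) (hyz : y ≤ z)
    (hxz : x + 1 ≤ z) (hF : F x y z = (p : ℤ)) :
    (3*x+1 = p ∧ y = x ∧ z = x+1) ∨ (3*x+2 = p ∧ y = x+1 ∧ z = x+1) := by
  obtain ⟨a, ha⟩ : ∃ a, y = x + a := ⟨y - x, by omega⟩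
  obtain ⟨b, hb⟩ : ∃ b, z = y + b := ⟨z - y, by omega⟩
  subst ha; subst hb
  have hfac : ((x:ℤ) + (x+a) + (x+a+b)) * ((a:ℤ)^2 + a*b + b^2) = p := by
    rw [← hF]; unfold F; push_cast; ring
  have hfacN : (x + (x+a) + (x+a+b)) * (a^2 + a*b + b^2) = p := by
    exact_mod_cast hfac
  have hdvd : (x + (x+a) + (x+a+b)) ∣ p := ⟨_, hfacN.symm⟩
  rcases hp.eq_one_or_self_of_dvd _ hdvd with h1 | h1
  · -- sum = 1: x=0, a+b components forced; leads to p = a²+ab+b² with x=0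
    have hx0 : x = 0 ∧ a = 0 ∧ b = 1 := by omega
    obtain ⟨rfl, rfl, rfl⟩ := hx0
    simp at hfacN
    exact absurd hfacN.symm hp.one_lt.ne'
  · have hQ : a^2 + a*b + b^2 = 1 := by
      have hppos : 0 < p := hp.pos
      have := hfacN
      rw [h1] at this
      nlinarith
    have ha1 : a ≤ 1 := by nlinarith
    have hb1 : b ≤ 1 := by nlinarith
    interval_cases a <;> interval_cases b <;> simp_all <;> omega

theorem stmt_8 (p : ℕ) (hp : p.Prime) (hp3 : p ≠ 3) : nu p = 1 := by
  have h3 : p % 3 = 1 ∨ p % 3 = 2 := by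
    have hnd : ¬ (3 ∣ p) := by
      intro h
      exact hp3 (((Nat.prime_dvd_prime_iff_eq (by norm_num) hp).mp h).symm)
    omega
  unfold nu
  rcases h3 with h3 | h3
  · have hset : {t : ℕ × ℕ × ℕ |
        t.1 ≤ t.2.1 ∧ t.2.1 ≤ t.2.2 ∧ t.1 + 1 ≤ t.2.2 ∧ F t.1 t.2.1 t.2.2 = p}
        = {(p/3, p/3, p/3 + 1)} := by
      ext ⟨x, y, z⟩
      simp only [Set.mem_setOf_eq, Set.mem_singleton_iff, Prod.mk.injEq]
      constructor
      · rintro ⟨h1, h2, hz, hF⟩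
        rcases key p hp x y z h1 h2 hz hF with ⟨hx, rfl, rfl⟩ | ⟨hx, rfl, rfl⟩
        · refine ⟨by omega, by omega, by omega⟩
        · omega
      · rintro ⟨rfl, rfl, rfl⟩
        refine ⟨le_refl _, by omega, by omega, ?_⟩
        rw [Fval1]
        push_cast
        omega
    rw [hset, Set.ncard_singleton]
  · have hset : {t : ℕ × ℕ × ℕ |
        t.1 ≤ t.2.1 ∧ t.2.1 ≤ t.2.2 ∧ t.1 + 1 ≤ t.2.2 ∧ F t.1 t.2.1 t.2.2 = p}
        = {(p/3, p/3 + 1, p/3 + 1)} := by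
      ext ⟨x, y, z⟩
      simp only [Set.mem_setOf_eq, Set.mem_singleton_iff, Prod.mk.injEq]
      constructor
      · rintro ⟨h1, h2, hz, hF⟩
        rcases key p hp x y z h1 h2 hz hF with ⟨hx, rfl, rfl⟩ | ⟨hx, rfl, rfl⟩
        · omega
        · refine ⟨by omega, by omega, by omega⟩
      · rintro ⟨rfl, rfl, rfl⟩
        refine ⟨by omega, le_refl _, by omega, ?_⟩
        rw [Fval2]
        push_cast
        omega
    rw [hset, Set.ncard_singleton]
end

section
/- For every prime p with p ≠ 3, ν(2p) = 1; that is, there is exactly one triple (x,y,z) ∈ ℕ³ with 0 ≤ x ≤ y ≤ z, z ≥ x + 1 and F(x,y,z) = 2p. -/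
lemma helper (p u v w : ℕ) (hp : p.Prime) (h1 : u ≤ v) (h2 : v ≤ w) (h3 : u + 1 ≤ w)
    (hF : F u v w = 2 * (p : ℤ)) :
    (v = u + 1 ∧ w = u + 1 ∧ 2 * p = 3 * u + 2) ∨
    (v = u ∧ w = u + 1 ∧ 2 * p = 3 * u + 1) := by
  have hp1 := hp.one_lt
  obtain ⟨a, ha⟩ : ∃ a, v = u + a := ⟨v - u, by omega⟩
  obtain ⟨b, hb⟩ : ∃ b, w = u + a + b := ⟨w - v, by omega⟩
  have hab : 1 ≤ a + b := by omega
  have N : (3 * u + 2 * a + b) * (a ^ 2 + a * b + b ^ 2) = 2 * p := by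
    have : ((3 * u + 2 * a + b) * (a ^ 2 + a * b + b ^ 2) : ℤ) = 2 * (p : ℤ) := by
      rw [← hF, ha, hb, F]; push_cast; ring
    exact_mod_cast this
  by_cases hpd : p ∣ a ^ 2 + a * b + b ^ 2
  · exfalso
    obtain ⟨m, hm⟩ := hpd
    have hsm : (3 * u + 2 * a + b) * m = 2 := by
      have h2' : p * ((3 * u + 2 * a + b) * m) = p * 2 := by
        calc p * ((3 * u + 2 * a + b) * m) = (3 * u + 2 * a + b) * (p * m) := by ring
          _ = 2 * p := by rw [← hm]; exact N
          _ = p * 2 := by ring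
      exact Nat.eq_of_mul_eq_mul_left hp.pos h2'
    have hs : 3 * u + 2 * a + b ≤ 2 := Nat.le_of_dvd (by norm_num) ⟨m, hsm.symm⟩
    have hu : u = 0 := by omega
    subst hu
    have hc : (a = 0 ∧ b = 1) ∨ (a = 0 ∧ b = 2) ∨ (a = 1 ∧ b = 0) := by omega
    rcases hc with ⟨rfl, rfl⟩ | ⟨rfl, rfl⟩ | ⟨rfl, rfl⟩
    · norm_num at hm hsm
      omega
    · norm_num at hm hsm
      subst hsm
      have : p = 4 := by omega
      subst this
      exact absurd hp (by norm_num)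
    · norm_num at hm hsm
      omega
  · have hps : p ∣ 3 * u + 2 * a + b := by
      have hd : p ∣ (3 * u + 2 * a + b) * (a ^ 2 + a * b + b ^ 2) := by
        rw [N]; exact ⟨2, by ring⟩
      rcases (hp.dvd_mul.mp hd) with h | h
      · exact h
      · exact absurd h hpd
    obtain ⟨k, hk⟩ := hps
    have hkq : k * (a ^ 2 + a * b + b ^ 2) = 2 := by
      have h2' : p * (k * (a ^ 2 + a * b + b ^ 2)) = p * 2 := by
        calc p * (k * (a ^ 2 + a * b + b ^ 2)) = (p * k) * (a ^ 2 + a * b + b ^ 2) := by ring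
          _ = 2 * p := by rw [← hk]; exact N
          _ = p * 2 := by ring
      exact Nat.eq_of_mul_eq_mul_left hp.pos h2'
    have hq2 : a ^ 2 + a * b + b ^ 2 ≤ 2 :=
      Nat.le_of_dvd (by norm_num) ⟨k, by rw [mul_comm]; exact hkq.symm⟩
    have ha1 : a ≤ 1 := by nlinarith
    have hb1 : b ≤ 1 := by nlinarith
    interval_cases a <;> interval_cases b
    · omega
    · norm_num at hkq
      subst hkq
      right; omega
    · norm_num at hkq
      subst hkq
      left; omega
    · norm_num at hq2

theorem stmt_9 (p : ℕ) (hp : p.Prime) (hp3 : p ≠ 3) : nu (2 * p) = 1 := by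
  have hmod : p % 3 = 1 ∨ p % 3 = 2 := by
    by_contra h
    have h3 : (3 : ℕ) ∣ p := by omega
    rcases (hp.eq_one_or_self_of_dvd 3 h3) with h | h
    · omega
    · exact hp3 h.symm
  have key : ∀ x : ℕ, (2 * p = 3 * x + 2 ∨ 2 * p = 3 * x + 1) →
      ∀ y z : ℕ, (2 * p = 3 * x + 2 → y = x + 1 ∧ z = x + 1) →
      (2 * p = 3 * x + 1 → y = x ∧ z = x + 1) →
      {t : ℕ × ℕ × ℕ |
        t.1 ≤ t.2.1 ∧ t.2.1 ≤ t.2.2 ∧ t.1 + 1 ≤ t.2.2 ∧ F t.1 t.2.1 t.2.2 = (2 * p : ℕ)}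
        = {(x, y, z)} := by
    intro x hx y z hy hz
    ext ⟨u, v, w⟩
    simp only [Set.mem_setOf_eq, Set.mem_singleton_iff, Prod.mk.injEq]
    constructor
    · rintro ⟨h1, h2, h3, h4⟩
      have h4' : F u v w = 2 * (p : ℤ) := by rw [h4]; push_cast; ring
      rcases helper p u v w hp h1 h2 h3 h4' with ⟨hv, hw, he⟩ | ⟨hv, hw, he⟩ <;> omega
    · rintro ⟨rfl, rfl, rfl⟩
      rcases hx with hx | hx
      · obtain ⟨rfl, rfl⟩ := hy hx
        refine ⟨by omega, by omega, by omega, ?_⟩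
        zify at hx
        simp only [F]; push_cast; linear_combination -hx
      · obtain ⟨rfl, rfl⟩ := hz hx
        refine ⟨by omega, by omega, by omega, ?_⟩
        zify at hx
        simp only [F]; push_cast; linear_combination -hx
  rcases hmod with hm | hm
  · obtain ⟨x, hx⟩ : ∃ x, 2 * p = 3 * x + 2 := ⟨(2 * p - 2) / 3, by omega⟩
    rw [nu, key x (Or.inl hx) (x+1) (x+1) (fun _ => ⟨rfl, rfl⟩) (fun h => by omega),
      Set.ncard_singleton]
  · obtain ⟨x, hx⟩ : ∃ x, 2 * p = 3 * x + 1 := ⟨(2 * p - 1) / 3, by omega⟩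
    rw [nu, key x (Or.inr hx) x (x+1) (fun h => by omega) (fun _ => ⟨rfl, rfl⟩),
      Set.ncard_singleton]
end

section
/- For every prime p with p ≡ 1 (mod 3), the unique triple (x,y,z) ∈ ℕ³ with 0 ≤ x ≤ y ≤ z, z ≥ x + 1 and F(x,y,z) = p is given by x = y = (p−1)/3 and z = (p+2)/3; and for every prime p with p ≡ 2 (mod 3), the unique such triple is given by x = (p−2)/3 and y = z = (p+1)/3. -/
lemma F_key (p : ℕ) (hp : p.Prime) (x a b : ℕ) (hab : 1 ≤ a + b)
    (h : F x (x + a) (x + a + b) = p) :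
    3 * x + 2 * a + b = p ∧ a * a + a * b + b * b = 1 := by
  have h2 : ((3 * x + 2 * a + b) * (a * a + a * b + b * b) : ℤ) = p := by
    unfold F at h
    push_cast at h ⊢
    linear_combination h
  have h3 : (3 * x + 2 * a + b) * (a * a + a * b + b * b) = p := by
    exact_mod_cast h2
  have hp2 := hp.two_le
  have hd : (3 * x + 2 * a + b) ∣ p := ⟨_, h3.symm⟩
  rcases hp.eq_one_or_self_of_dvd _ hd with h1 | h1
  · have hx : x = 0 ∧ a = 0 ∧ b = 1 := by omega
    obtain ⟨rfl, rfl, rfl⟩ := hx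
    simp at h3
    omega
  · have hq : a * a + a * b + b * b = 1 := by
      have hpos := hp.pos
      have : p * (a * a + a * b + b * b) = p * 1 := by rw [h1] at h3; omega
      exact Nat.eq_of_mul_eq_mul_left hpos this
    exact ⟨h1, hq⟩

theorem stmt_10 (p : ℕ) (hp : p.Prime) :
    (p % 3 = 1 → ∀ x y z : ℕ,
      (x ≤ y ∧ y ≤ z ∧ x + 1 ≤ z ∧ F x y z = p) ↔
      (x = (p - 1) / 3 ∧ y = (p - 1) / 3 ∧ z = (p + 2) / 3)) ∧
    (p % 3 = 2 → ∀ x y z : ℕ,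
      (x ≤ y ∧ y ≤ z ∧ x + 1 ≤ z ∧ F x y z = p) ↔
      (x = (p - 2) / 3 ∧ y = (p + 1) / 3 ∧ z = (p + 1) / 3)) := by
  have hp2 := hp.two_le
  constructor
  · intro hmod x y z
    constructor
    · rintro ⟨hxy, hyz, hxz, hF⟩
      obtain ⟨a, rfl⟩ := Nat.exists_eq_add_of_le hxy
      obtain ⟨b, rfl⟩ := Nat.exists_eq_add_of_le hyz
      obtain ⟨hs, hq⟩ := F_key p hp x a b (by omega) hF
      have ha : a ≤ 1 := by nlinarith
      have hb : b ≤ 1 := by nlinarith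
      interval_cases a <;> interval_cases b <;> omega
    · rintro ⟨rfl, rfl, rfl⟩
      obtain ⟨k, hk⟩ : ∃ k, p = 3 * k + 1 := ⟨p / 3, by omega⟩
      have e1 : (p - 1) / 3 = k := by omega
      have e2 : (p + 2) / 3 = k + 1 := by omega
      refine ⟨le_refl _, by omega, by omega, ?_⟩
      rw [e1, e2]
      unfold F
      push_cast [hk]
      ring
  · intro hmod x y z
    constructor
    · rintro ⟨hxy, hyz, hxz, hF⟩
      obtain ⟨a, rfl⟩ := Nat.exists_eq_add_of_le hxy
      obtain ⟨b, rfl⟩ := Nat.exists_eq_add_of_le hyz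
      obtain ⟨hs, hq⟩ := F_key p hp x a b (by omega) hF
      have ha : a ≤ 1 := by nlinarith
      have hb : b ≤ 1 := by nlinarith
      interval_cases a <;> interval_cases b <;> omega
    · rintro ⟨rfl, rfl, rfl⟩
      obtain ⟨k, hk⟩ : ∃ k, p = 3 * k + 2 := ⟨p / 3, by omega⟩
      have e1 : (p - 2) / 3 = k := by omega
      have e2 : (p + 1) / 3 = k + 1 := by omega
      refine ⟨by omega, le_refl _, by omega, ?_⟩
      rw [e1, e2]
      unfold F
      push_cast [hk]
      ring
end

section
/- For every natural number k, ν(8^k) ≥ k + 1; that is, there are at least k + 1 triples (x,y,z) ∈ ℕ³ with 0 ≤ x ≤ y ≤ z, z ≥ x + 1 and F(x,y,z) = 8^k. -/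
def trip (k j : ℕ) : ℕ × ℕ × ℕ :=
  if Even j then (2^(k-j) * (8^j/3), 2^(k-j) * (8^j/3), 2^(k-j) * (8^j/3 + 1))
  else (2^(k-j) * (8^j/3), 2^(k-j) * (8^j/3 + 1), 2^(k-j) * (8^j/3 + 1))

lemma mod3 (j : ℕ) : 8^j % 3 = if Even j then 1 else 2 := by
  induction j with
  | zero => simp
  | succ n ih =>
    rw [pow_succ, Nat.mul_mod, ih]
    by_cases h : Even n <;> simp [h, Nat.even_add_one]

lemma cube_pow (k j : ℕ) : ((2:ℤ)^(k-j))^3 = 8^(k-j) := by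
  rw [← pow_mul, mul_comm, pow_mul]; norm_num

lemma trip_mem (k j : ℕ) (hj : j ≤ k) :
    (trip k j).1 ≤ (trip k j).2.1 ∧ (trip k j).2.1 ≤ (trip k j).2.2 ∧
      (trip k j).1 + 1 ≤ (trip k j).2.2 ∧
      F (trip k j).1 (trip k j).2.1 (trip k j).2.2 = (8^k : ℕ) := by
  have hm := mod3 j
  have hc : 1 ≤ 2^(k-j) := Nat.one_le_two_pow
  have hsum : 2^(k-j) * (8^j/3 + 1) = 2^(k-j) * (8^j/3) + 2^(k-j) := by ring
  have h8 : ((8:ℤ))^(k-j) * 8^j = 8^k := by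
    rw [← pow_add]; congr 1; omega
  by_cases h : Even j <;> simp only [trip, h, if_true, if_false, F]
  · rw [if_pos h] at hm
    have ha : 3 * (8^j/3) + 1 = 8^j := by omega
    have ha' := congrArg (Nat.cast : ℕ → ℤ) ha
    push_cast at ha'
    refine ⟨le_refl _, by omega, by omega, ?_⟩
    push_cast
    linear_combination ((2:ℤ)^(k-j))^3 * ha' + (8:ℤ)^j * cube_pow k j + h8
  · rw [if_neg h] at hm
    have ha : 3 * (8^j/3) + 2 = 8^j := by omega
    have ha' := congrArg (Nat.cast : ℕ → ℤ) ha
    push_cast at ha'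
    refine ⟨by omega, le_refl _, by omega, ?_⟩
    push_cast
    linear_combination ((2:ℤ)^(k-j))^3 * ha' + (8:ℤ)^j * cube_pow k j + h8

lemma z_bound (X Y Z N : ℤ) (h1 : X ≤ Y) (h2 : Y ≤ Z) (h3 : X + 1 ≤ Z)
    (hx : 0 ≤ X) (hy : 0 ≤ Y)
    (h4 : X ^ 3 + Y ^ 3 + Z ^ 3 - 3 * X * Y * Z = N) : Z ≤ N := by
  set u := X - Y with hu
  set v := Y - Z with hv
  have hq2 : 2 * (u^2 + u*v + v^2) ≥ (u+v)^2 := by nlinarith [sq_nonneg (u - v)]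
  have huv1 : u + v ≤ -1 := by rw [hu, hv]; linarith
  have huv : (u+v)^2 ≥ 1 := by nlinarith [sq_nonneg (u+v+1)]
  have hm0 : 0 < u^2 + u*v + v^2 := by linarith
  have hq1 : 1 ≤ u^2 + u*v + v^2 := Int.lt_iff_add_one_le.mp hm0
  have hfact : N = (X + Y + Z) * (u^2 + u*v + v^2) := by
    rw [← h4, hu, hv]; ring
  nlinarith [mul_nonneg (show (0:ℤ) ≤ X + Y + Z by linarith)
    (show (0:ℤ) ≤ u^2 + u*v + v^2 - 1 by linarith)]

lemma finite_sol (n : ℕ) : {t : ℕ × ℕ × ℕ |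
    t.1 ≤ t.2.1 ∧ t.2.1 ≤ t.2.2 ∧ t.1 + 1 ≤ t.2.2 ∧ F t.1 t.2.1 t.2.2 = n}.Finite := by
  apply Set.Finite.subset (((Set.finite_Iic n).prod ((Set.finite_Iic n).prod
    (Set.finite_Iic n))))
  rintro ⟨x, y, z⟩ ⟨h1, h2, h3, h4⟩
  have h1a : x ≤ y := h1
  have h2a : y ≤ z := h2
  have h3a : x + 1 ≤ z := h3
  simp only [F] at h4
  have hz : (z:ℤ) ≤ n := by
    refine z_bound x y z n ?_ ?_ ?_ ?_ ?_ h4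
    · exact_mod_cast h1a
    · exact_mod_cast h2a
    · exact_mod_cast h3a
    · exact Int.natCast_nonneg x
    · exact Int.natCast_nonneg y
  have hzn : z ≤ n := by exact_mod_cast hz
  have hyn : y ≤ n := le_trans h2a hzn
  have hxn : x ≤ n := le_trans h1a hyn
  exact ⟨hxn, hyn, hzn⟩

lemma trip_z (k j : ℕ) (hj : j ≤ k) :
    2^(k + 2*j) < 3 * (trip k j).2.2 ∧ 3 * (trip k j).2.2 ≤ 2^(k + 2*j) + 2^(k+1) := by
  have hm := mod3 j
  have hc : 1 ≤ 2^(k-j) := Nat.one_le_two_pow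
  have hck : 2^(k-j) ≤ 2^k := Nat.pow_le_pow_right (by norm_num) (by omega)
  have hpow : 2^(k-j) * 8^j = 2^(k + 2*j) := by
    have : (8:ℕ)^j = 2^(3*j) := by rw [pow_mul]; norm_num
    rw [this, ← pow_add]; congr 1; omega
  by_cases h : Even j <;> simp only [trip, h, if_true, if_false]
  · rw [if_pos h] at hm
    have ha : 3 * (8^j/3) + 1 = 8^j := by omega
    have e : 3 * (2^(k-j) * (8^j/3 + 1)) = 2^(k-j) * (3 * (8^j/3) + 1) + 2 * 2^(k-j) := by
      ring
    rw [e, ha, hpow]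
    constructor <;> omega
  · rw [if_neg h] at hm
    have ha : 3 * (8^j/3) + 2 = 8^j := by omega
    have e : 3 * (2^(k-j) * (8^j/3 + 1)) = 2^(k-j) * (3 * (8^j/3) + 2) + 2^(k-j) := by
      ring
    rw [e, ha, hpow]
    constructor <;> omega

lemma trip_inj (k : ℕ) : Set.InjOn (trip k) ↑(Finset.range (k+1)) := by
  have key : ∀ i j : ℕ, i < j → j ≤ k → trip k i ≠ trip k j := by
    intro i j hij hjk heq
    obtain ⟨hi1, hi2⟩ := trip_z k i (by omega)
    obtain ⟨hj1, hj2⟩ := trip_z k j hjk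
    rw [heq] at hi2
    have h1 : 2^(k+1) ≤ 2^(k + 2*i + 1) := Nat.pow_le_pow_right (by norm_num) (by omega)
    have h2 : 2^(k + 2*i + 2) ≤ 2^(k + 2*j) := Nat.pow_le_pow_right (by norm_num) (by omega)
    have e1 : 2^(k + 2*i + 1) = 2 * 2^(k + 2*i) := by ring
    have e2 : 2^(k + 2*i + 2) = 4 * 2^(k + 2*i) := by ring
    omega
  intro i hi j hj heq
  simp only [Finset.coe_range, Set.mem_Iio] at hi hj
  rcases lt_trichotomy i j with h | h | h
  · exact absurd heq (key i j h (by omega))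
  · exact h
  · exact absurd heq.symm (key j i h (by omega))

theorem stmt_13 (k : ℕ) : nu (8 ^ k) ≥ k + 1 := by
  classical
  set S := {t : ℕ × ℕ × ℕ |
    t.1 ≤ t.2.1 ∧ t.2.1 ≤ t.2.2 ∧ t.1 + 1 ≤ t.2.2 ∧ F t.1 t.2.1 t.2.2 = (8^k : ℕ)} with hS
  have hsub : ↑((Finset.range (k+1)).image (trip k)) ⊆ S := by
    intro t ht
    simp only [Finset.coe_image, Set.mem_image, Finset.mem_coe, Finset.mem_range] at ht
    obtain ⟨j, hj, rfl⟩ := ht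
    exact trip_mem k j (by omega)
  have hcard : ((Finset.range (k+1)).image (trip k)).card = k + 1 := by
    rw [Finset.card_image_of_injOn (trip_inj k), Finset.card_range]
  calc k + 1 = ((Finset.range (k+1)).image (trip k) : Set (ℕ × ℕ × ℕ)).ncard := by
        rw [Set.ncard_coe_finset, hcard]
    _ ≤ S.ncard := Set.ncard_le_ncard hsub (finite_sol (8^k))
    _ = nu (8^k) := rfl
end

section
/- For every natural number k, there is exactly one triple (x,y,z) ∈ ℕ³ with 0 ≤ x ≤ y ≤ z, z ≥ x + 1, F(x,y,z) = 8^k, and not all of x, y, z even. -/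
lemma odd_dvd_pow_two {q n : ℕ} (h : Odd q) (hd : q ∣ 2 ^ n) : q = 1 := by
  obtain ⟨i, hi, rfl⟩ := (Nat.dvd_prime_pow Nat.prime_two).mp hd
  cases i with
  | zero => rfl
  | succ j =>
    exfalso
    have : Even (2 ^ (j + 1)) := by
      simp [Nat.even_pow]
    exact ((Nat.not_even_iff_odd.mpr h)) this

lemma q_odd_of_not_both_even {a b : ℕ} (h : ¬ (Even a ∧ Even b)) :
    Odd (a ^ 2 + a * b + b ^ 2) := by
  rcases Nat.even_or_odd a with ha | ha <;> rcases Nat.even_or_odd b with hb | hb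
  · exact absurd ⟨ha, hb⟩ h
  · obtain ⟨a', rfl⟩ := ha; obtain ⟨b', rfl⟩ := hb
    exact ⟨2 * a' ^ 2 + 2 * a' * b' + a' + 2 * b' ^ 2 + 2 * b', by ring⟩
  · obtain ⟨a', rfl⟩ := ha; obtain ⟨b', rfl⟩ := hb
    exact ⟨2 * a' ^ 2 + 2 * a' + 2 * a' * b' + b' + 2 * b' ^ 2, by ring⟩
  · obtain ⟨a', rfl⟩ := ha; obtain ⟨b', rfl⟩ := hb
    exact ⟨2 * a' ^ 2 + 2 * a' + 2 * a' * b' + a' + b' + 2 * b' ^ 2 + 2 * b' + 1, by ring⟩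

lemma key_s15 (x a b k : ℕ) (hab : 1 ≤ a + b)
    (hF : (3 * x + 2 * a + b) * (a ^ 2 + a * b + b ^ 2) = 8 ^ k)
    (hpar : ¬(Even x ∧ Even (x + a) ∧ Even (x + a + b))) :
    (a = 0 ∧ b = 1 ∧ 3 * x + 1 = 8 ^ k) ∨ (a = 1 ∧ b = 0 ∧ 3 * x + 2 = 8 ^ k) := by
  have h8 : (8 : ℕ) ^ k = 2 ^ (3 * k) := by
    rw [show (8 : ℕ) = 2 ^ 3 by norm_num, ← pow_mul]
  by_cases hab2 : Even a ∧ Even b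
  · -- a, b both even: derive contradiction
    exfalso
    rcases Nat.even_or_odd (3 * x + 2 * a + b) with hs | hs
    · -- s even, a b even → x even → all even
      apply hpar
      simp only [Nat.even_iff] at hab2 hs ⊢
      omega
    · -- s odd, divides power of 2 → s = 1
      have hd : (3 * x + 2 * a + b) ∣ 2 ^ (3 * k) := by
        rw [← h8, ← hF]; exact Dvd.intro _ rfl
      have hs1 := odd_dvd_pow_two hs hd
      simp only [Nat.even_iff] at hab2
      omega
  · have hq : Odd (a ^ 2 + a * b + b ^ 2) := q_odd_of_not_both_even hab2
    have hd : (a ^ 2 + a * b + b ^ 2) ∣ 2 ^ (3 * k) := by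
      rw [← h8, ← hF]; exact Dvd.intro_left _ rfl
    have hq1 := odd_dvd_pow_two hq hd
    have ha1 : a ≤ 1 := by nlinarith
    have hb1 : b ≤ 1 := by nlinarith
    interval_cases a <;> interval_cases b <;> omega

lemma eight_pow_mod_three (k : ℕ) : 8 ^ k % 3 = 1 ∨ 8 ^ k % 3 = 2 := by
  induction k with
  | zero => left; rfl
  | succ j ih =>
    have h : 8 ^ (j + 1) % 3 = (8 % 3) * (8 ^ j % 3) % 3 := by
      rw [pow_succ, Nat.mul_mod, mul_comm]
    rcases ih with h1 | h1 <;> rw [h1] at h <;> omega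

lemma F_formula (x a b : ℕ) :
    F x (x + a) (x + a + b) = ((3 * x + 2 * a + b) * (a ^ 2 + a * b + b ^ 2) : ℕ) := by
  unfold F; push_cast; ring

theorem stmt_15 (k : ℕ) :
    ∃! t : ℕ × ℕ × ℕ,
      t.1 ≤ t.2.1 ∧ t.2.1 ≤ t.2.2 ∧ t.1 + 1 ≤ t.2.2 ∧ F t.1 t.2.1 t.2.2 = 8 ^ k ∧
      ¬(Even t.1 ∧ Even t.2.1 ∧ Even t.2.2) := by
  have hk1 : 1 ≤ 8 ^ k := Nat.one_le_pow _ _ (by norm_num)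
  rcases eight_pow_mod_three k with h3 | h3
  · -- 8^k ≡ 1 mod 3 : witness (n, n, n+1) with n = (8^k - 1)/3
    obtain ⟨n, h3n⟩ : ∃ n, 3 * n + 1 = 8 ^ k := ⟨(8 ^ k - 1) / 3, by omega⟩
    refine ⟨(n, n, n + 1), ⟨le_refl _, Nat.le_succ _, le_refl _, ?_, ?_⟩, ?_⟩
    · have hv : F n n (n + 1) = ((3 * n + 1 : ℕ) : ℤ) := by
        unfold F; push_cast; ring
      rw [hv, h3n]; push_cast; ring
    · simp only [Nat.even_iff]
      omega
    · rintro ⟨x, y, z⟩ ⟨hxy, hyz, hxz, hF, hpar⟩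
      dsimp only at hxy hyz hxz hF hpar
      obtain ⟨a, rfl⟩ : ∃ a, y = x + a := ⟨y - x, by omega⟩
      obtain ⟨b, rfl⟩ : ∃ b, z = x + a + b := ⟨z - (x + a), by omega⟩
      have hnat : (3 * x + 2 * a + b) * (a ^ 2 + a * b + b ^ 2) = 8 ^ k := by
        have := F_formula x a b
        rw [this] at hF
        exact_mod_cast hF
      have := key_s15 x a b k (by omega) hnat hpar
      rcases this with ⟨ha, hb, hx⟩ | ⟨ha, hb, hx⟩
      · subst ha; subst hb
        have : x = n := by omega
        simp [this]
      · omega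
  · -- 8^k ≡ 2 mod 3 : witness (n, n+1, n+1) with n = (8^k - 2)/3
    obtain ⟨n, h3n⟩ : ∃ n, 3 * n + 2 = 8 ^ k := ⟨(8 ^ k - 2) / 3, by omega⟩
    refine ⟨(n, n + 1, n + 1), ⟨Nat.le_succ _, le_refl _, le_refl _, ?_, ?_⟩, ?_⟩
    · have hv : F n (n + 1) (n + 1) = ((3 * n + 2 : ℕ) : ℤ) := by
        unfold F; push_cast; ring
      rw [hv, h3n]; push_cast; ring
    · simp only [Nat.even_iff]
      omega
    · rintro ⟨x, y, z⟩ ⟨hxy, hyz, hxz, hF, hpar⟩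
      dsimp only at hxy hyz hxz hF hpar
      obtain ⟨a, rfl⟩ : ∃ a, y = x + a := ⟨y - x, by omega⟩
      obtain ⟨b, rfl⟩ : ∃ b, z = x + a + b := ⟨z - (x + a), by omega⟩
      have hnat : (3 * x + 2 * a + b) * (a ^ 2 + a * b + b ^ 2) = 8 ^ k := by
        have := F_formula x a b
        rw [this] at hF
        exact_mod_cast hF
      have := key_s15 x a b k (by omega) hnat hpar
      rcases this with ⟨ha, hb, hx⟩ | ⟨ha, hb, hx⟩
      · omega
      · subst ha; subst hb
        have : x = n := by omega
        simp [this]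
end

section
/- For every natural number k, ν(8^k) = k + 1; that is, there are exactly k + 1 triples (x,y,z) ∈ ℕ³ with 0 ≤ x ≤ y ≤ z, z ≥ x + 1 and F(x,y,z) = 8^k. -/
/-! Writing `y = x + u` and `z = y + v`, one has `F = (3x + 2u + v)(u² + uv + v²)`. If `F = 8^k`,
both factors are powers of `2`; since `u² + uv + v²` is odd unless `u` and `v` are both even,
descent gives `{u, v} = {0, 2^m}`. Then `2^m ∣ x`, and the triple is `2^m` times the unique
solution of `F = 8^(k-m)` with `z = x + 1`, namely `(q, q, q + 1)` or `(q, q + 1, q + 1)` as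
`8^(k-m) = 3q + 1` or `3q + 2`. Hence the solutions are indexed by `m ∈ [0, k]`. -/

def solutionSet (n : ℕ) : Set (ℕ × ℕ × ℕ) :=
  {t | t.1 ≤ t.2.1 ∧ t.2.1 ≤ t.2.2 ∧ t.1 + 1 ≤ t.2.2 ∧ F t.1 t.2.1 t.2.2 = n}

theorem nu_eq_ncard_solutionSet (n : ℕ) : nu n = (solutionSet n).ncard := rfl

theorem mk_mem_solutionSet_iff {n x y z : ℕ} :
    (x, y, z) ∈ solutionSet n ↔ x ≤ y ∧ y ≤ z ∧ x + 1 ≤ z ∧ F x y z = n :=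
  Iff.rfl

theorem F_mul (d x y z : ℕ) : F (d * x) (d * y) (d * z) = (d : ℤ) ^ 3 * F x y z := by
  unfold F; push_cast; ring

theorem F_add_add (x u v : ℕ) :
    F x (x + u) (x + u + v) = ((3 * x + 2 * u + v) * (u ^ 2 + u * v + v ^ 2) : ℕ) := by
  unfold F; push_cast; ring

theorem smul_mem_solutionSet {d n : ℕ} {t : ℕ × ℕ × ℕ} (hd : 0 < d) (ht : t ∈ solutionSet n) :
    d • t ∈ solutionSet (d ^ 3 * n) := by
  obtain ⟨x, y, z⟩ := t
  obtain ⟨hxy, hyz, hxz, hF⟩ := ht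
  simp only [Prod.smul_mk, smul_eq_mul, mk_mem_solutionSet_iff, F_mul, hF]
  refine ⟨Nat.mul_le_mul_left d hxy, Nat.mul_le_mul_left d hyz, by nlinarith, by push_cast; ring⟩

-- `F q q (q + 1) = 3q + 1` and `F q (q + 1) (q + 1) = 3q + 2`; junk when `3 ∣ n`.
def baseTriple (n : ℕ) : ℕ × ℕ × ℕ :=
  (n / 3, n / 3 + n % 3 - 1, n / 3 + 1)

theorem baseTriple_mem_solutionSet {n : ℕ} (hn : n % 3 ≠ 0) : baseTriple n ∈ solutionSet n := by
  have hdiv := Nat.div_add_mod n 3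
  obtain h | h : n % 3 = 1 ∨ n % 3 = 2 := by omega
  · rw [show baseTriple n = (n / 3, n / 3 + 0, n / 3 + 0 + 1) by simp [baseTriple, h],
      mk_mem_solutionSet_iff, F_add_add]
    exact ⟨by omega, by omega, by omega, by norm_num; omega⟩
  · rw [show baseTriple n = (n / 3, n / 3 + 1, n / 3 + 1 + 0) by simp [baseTriple, h],
      mk_mem_solutionSet_iff, F_add_add]
    exact ⟨by omega, by omega, by omega, by norm_num; omega⟩

theorem smul_baseTriple_sub (d n : ℕ) : (d • baseTriple n).2.2 - (d • baseTriple n).1 = d := by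
  simp [baseTriple, mul_add]

theorem eight_pow_mod_three_ne_zero (j : ℕ) : 8 ^ j % 3 ≠ 0 := fun h => by
  simpa using Nat.prime_three.dvd_of_dvd_pow (Nat.dvd_of_mod_eq_zero h)

theorem exists_eq_two_pow_of_sq_add_mul_add_sq_eq_two_pow {u v b : ℕ}
    (h : u ^ 2 + u * v + v ^ 2 = 2 ^ b) : ∃ m, (u = 2 ^ m ∧ v = 0) ∨ (u = 0 ∧ v = 2 ^ m) := by
  induction b using Nat.strong_induction_on generalizing u v with
  | _ b ih =>
  rcases b with _ | b
  · have : u ≤ 1 := by nlinarith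
    have : v ≤ 1 := by nlinarith
    refine ⟨0, ?_⟩
    interval_cases u <;> interval_cases v <;> simp_all
  have heven : Even (u ^ 2 + u * v + v ^ 2) := by
    rw [h]; exact Nat.even_pow.2 ⟨even_two, b.succ_ne_zero⟩
  obtain ⟨⟨u, rfl⟩, ⟨v, rfl⟩⟩ : Even u ∧ Even v := by
    simp only [Nat.even_add, Nat.even_pow, Nat.even_mul, ne_eq, OfNat.ofNat_ne_zero,
      not_false_eq_true, and_true, iff_self_or] at heven
    tauto
  have hscaled : 4 * (u ^ 2 + u * v + v ^ 2) = 2 ^ (b + 1) := by rw [← h]; ring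
  rcases b with _ | b
  · omega
  rw [show 2 ^ (b + 1 + 1) = 4 * 2 ^ b by ring] at hscaled
  obtain ⟨m, hm⟩ := ih b (by omega) (u := u) (v := v) (by linarith)
  exact ⟨m + 1, by rcases hm with ⟨rfl, rfl⟩ | ⟨rfl, rfl⟩ <;> simp [pow_succ, mul_two]⟩

theorem eight_pow_eq_two_pow_pow_three (m : ℕ) : 8 ^ m = (2 ^ m) ^ 3 := by
  rw [← pow_mul, mul_comm, pow_mul]; norm_num

theorem eq_pow_mul_div_three_of_mul_sq_eq_eight_pow {x c m k : ℕ} (hc₀ : 0 < c) (hc₃ : c < 3)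
    (h : (3 * x + c * 2 ^ m) * (2 ^ m) ^ 2 = 8 ^ k) :
    m ≤ k ∧ x = 2 ^ m * (8 ^ (k - m) / 3) ∧ 8 ^ (k - m) % 3 = c := by
  have hpos : 0 < 2 ^ m := by positivity
  have hmk : m ≤ k := by
    refine (Nat.pow_le_pow_iff_right (by norm_num : 1 < 8)).1 ?_
    rw [← h, eight_pow_eq_two_pow_pow_three, pow_succ' _ 2]
    gcongr
    nlinarith
  have hs : 3 * x + c * 2 ^ m = 2 ^ m * 8 ^ (k - m) := by
    refine Nat.eq_of_mul_eq_mul_right (pow_pos hpos 2) ?_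
    rw [h, ← pow_mul_pow_sub 8 hmk, eight_pow_eq_two_pow_pow_three]
    ring
  obtain ⟨x', rfl⟩ : 2 ^ m ∣ x := by
    have : 2 ^ m ∣ 3 * x := (Nat.dvd_add_left (dvd_mul_left _ _)).1 (hs ▸ dvd_mul_right _ _)
    exact (Nat.Coprime.pow_left m (by norm_num : Nat.Coprime 2 3)).dvd_of_dvd_mul_left this
  have hx' : 3 * x' + c = 8 ^ (k - m) := Nat.eq_of_mul_eq_mul_left hpos (by linarith)
  exact ⟨hmk, by rw [← hx']; congr 1; omega, by omega⟩

theorem exists_pow_smul_baseTriple_eq {k : ℕ} {t : ℕ × ℕ × ℕ} (ht : t ∈ solutionSet (8 ^ k)) :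
    ∃ m ≤ k, 2 ^ m • baseTriple (8 ^ (k - m)) = t := by
  obtain ⟨x, y, z⟩ := t
  obtain ⟨hxy, hyz, -, hF⟩ := mk_mem_solutionSet_iff.1 ht
  obtain ⟨u, rfl⟩ := Nat.exists_eq_add_of_le hxy
  obtain ⟨v, rfl⟩ := Nat.exists_eq_add_of_le hyz
  have hprod : (3 * x + 2 * u + v) * (u ^ 2 + u * v + v ^ 2) = 8 ^ k := by
    rw [F_add_add] at hF; exact_mod_cast hF
  obtain ⟨b, -, hb⟩ := (Nat.dvd_prime_pow Nat.prime_two).1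
    (show u ^ 2 + u * v + v ^ 2 ∣ 2 ^ (3 * k) by rw [pow_mul]; exact Dvd.intro_left _ hprod)
  obtain ⟨m, ⟨rfl, rfl⟩ | ⟨rfl, rfl⟩⟩ := exists_eq_two_pow_of_sq_add_mul_add_sq_eq_two_pow hb
  · obtain ⟨hmk, rfl, hr⟩ := eq_pow_mul_div_three_of_mul_sq_eq_eight_pow (x := x) (c := 2) (m := m)
      two_pos (by norm_num) (by rw [← hprod]; ring)
    exact ⟨m, hmk, by simp [baseTriple, hr, mul_add]⟩
  · obtain ⟨hmk, rfl, hr⟩ := eq_pow_mul_div_three_of_mul_sq_eq_eight_pow (x := x) (c := 1) (m := m)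
      one_pos (by norm_num) (by rw [← hprod]; ring)
    exact ⟨m, hmk, by simp [baseTriple, hr, mul_add]⟩

theorem solutionSet_eight_pow (k : ℕ) :
    solutionSet (8 ^ k) = (fun m => 2 ^ m • baseTriple (8 ^ (k - m))) '' Set.Iic k := by
  ext t
  refine ⟨fun ht => exists_pow_smul_baseTriple_eq ht, ?_⟩
  rintro ⟨m, hm, rfl⟩
  have := smul_mem_solutionSet (d := 2 ^ m) (by positivity)
    (baseTriple_mem_solutionSet (eight_pow_mod_three_ne_zero (k - m)))
  rwa [← eight_pow_eq_two_pow_pow_three, ← pow_add, Nat.add_sub_cancel' hm] at this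

theorem stmt_16 (k : ℕ) : nu (8 ^ k) = k + 1 := by
  rw [nu_eq_ncard_solutionSet, solutionSet_eight_pow, Set.ncard_image_of_injective,
    Set.ncard_Iic_nat]
  intro m₁ m₂ h
  have := congrArg (fun t => t.2.2 - t.1) h
  simp only [smul_baseTriple_sub] at this
  exact Nat.pow_right_injective le_rfl this
end
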